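/- Let H > 0, let I = (a,b) be a bounded open interval, and let v : [a,b] → ℝ be continuous with v(x) > -H for all x ∈ I. Then every function θ that is continuously differentiable on the closure of O_I(v) and satisfies θ(x, v(x)) = 0 for all x ∈ I obeys the trace estimate ∫_I |θ(x, -H)|² dx ≤ 2 ‖θ‖_{L²(O_I(v))} ‖∂_z θ‖_{L²(O_I(v))}. -/

import Mathlib

open MeasureTheory Set

/-- The region between the bottom plate at height `-H` and the graph of `v` over
the interval `I = (a,b)`. -/
def OIv (H a b : ℝ) (v : ℝ → ℝ) : Set (ℝ × ℝ) :=
  {p : ℝ × ℝ | p.1 ∈ Set.Ioo a b ∧ -H < p.2 ∧ p.2 < v p.1}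

/-!
For fixed `x ∈ I`, the function `z ↦ θ (x, z)` vanishes at the top of the vertical segment
`[-H, v x]`, so the fundamental theorem of calculus gives
`θ (x, -H)² = -∫ 2 θ ∂_z θ ≤ 2 ∫ |θ ∂_z θ|` along the segment. Integrating in `x` (Fubini)
and applying Cauchy–Schwarz on `O_I(v)` yields the estimate. All integrals involved are
genuine (not junk values) because `O_I(v)` is open with compact closure, so `θ` and `∂_z θ`
are bounded on it; for `∂_z θ` this uses that a function `C¹` up to the boundary has a
derivative that is locally bounded near every boundary point.
-/

open Filter Topology
open scoped ENNReal

section Calculus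

variable {E F : Type*} [NormedAddCommGroup E] [NormedSpace ℝ E]
  [NormedAddCommGroup F] [NormedSpace ℝ F]

/- Near each point `p` of the closure, `f` has a derivative within the closure that is continuous
at `p`; on the open set `s` it is the derivative of `f`, hence bounded near `p`. -/
theorem ContDiffOn.exists_bound_fderiv_of_isCompact_closure {f : E → F} {s : Set E}
    (hs : IsOpen s) (hK : IsCompact (closure s)) (hf : ContDiffOn ℝ 1 f (closure s)) :
    ∃ C, ∀ p ∈ s, ‖fderiv ℝ f p‖ ≤ C := by
  suffices Bornology.IsBounded (fderiv ℝ f '' (s ∩ closure s)) by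
    rw [inter_eq_left.2 subset_closure] at this
    obtain ⟨C, hC⟩ := isBounded_iff_forall_norm_le.1 this
    exact ⟨C, fun p hp => hC _ (mem_image_of_mem _ hp)⟩
  refine hK.induction_on (p := fun t => Bornology.IsBounded (fderiv ℝ f '' (s ∩ t)))
    (by simp) (fun t u htu hu => hu.subset (image_mono (inter_subset_inter_right _ htu)))
    (fun t u ht hu => by rw [inter_union_distrib_left, image_union]; exact ht.union hu) ?_
  intro p hp
  have hfp : ContDiffWithinAt ℝ (0 + 1) f (closure s) p := by simpa using hf p hp
  obtain ⟨u, hu, husub, -, f', hf'u, hf'p⟩ :=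
    (contDiffWithinAt_succ_iff_hasFDerivWithinAt' (by simp)).1 hfp
  rw [insert_eq_of_mem hp] at hu husub
  have hnear : ∀ᶠ q in 𝓝[closure s] p, f' q ∈ Metric.ball (f' p) 1 :=
    hf'p.continuousWithinAt (Metric.ball_mem_nhds _ one_pos)
  refine ⟨_, inter_mem hu hnear, (Metric.isBounded_ball (x := f' p) (r := 1)).subset ?_⟩
  rintro _ ⟨q, ⟨hqs, hqu, hq⟩, rfl⟩
  have hq' : HasFDerivAt f (f' q) q :=
    (hf'u q hqu).hasFDerivAt (mem_of_superset (hs.mem_nhds hqs) subset_closure)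
  rwa [hq'.fderiv]

end Calculus

theorem sq_le_two_mul_integral_abs_mul_deriv {f f' : ℝ → ℝ} {c d : ℝ} (hcd : c ≤ d)
    (hf : ContinuousOn f (Icc c d)) (hderiv : ∀ z ∈ Ioo c d, HasDerivAt f (f' z) z)
    (hint : IntegrableOn (fun z => f z * f' z) (Ioo c d)) (hd : f d = 0) :
    f c ^ 2 ≤ 2 * ∫ z in Ioo c d, |f z * f' z| := by
  have hint' : IntervalIntegrable (fun z => 2 * (f z * f' z)) volume c d :=
    ((intervalIntegrable_iff_integrableOn_Ioo_of_le hcd).2 hint).const_mul 2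
  have hFTC : ∫ z in c..d, 2 * (f z * f' z) = f d ^ 2 - f c ^ 2 :=
    intervalIntegral.integral_eq_sub_of_hasDerivAt_of_le hcd (hf.pow 2)
      (fun z hz => ((hderiv z hz).pow 2).congr_deriv (by norm_num; ring)) hint'
  calc f c ^ 2 = -∫ z in c..d, 2 * (f z * f' z) := by rw [hFTC, hd]; ring
    _ ≤ ∫ z in c..d, |2 * (f z * f' z)| :=
      (neg_le_abs _).trans (intervalIntegral.abs_integral_le_integral_abs hcd)
    _ = 2 * ∫ z in Ioo c d, |f z * f' z| := by
      simp only [abs_mul, abs_two, intervalIntegral.integral_of_le hcd,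
        integral_Ioc_eq_integral_Ioo, integral_const_mul]

theorem integral_abs_mul_le_sqrt_mul_sqrt {α : Type*} [MeasurableSpace α] {μ : Measure α}
    {f g : α → ℝ} (hf : MemLp f 2 μ) (hg : MemLp g 2 μ) :
    ∫ x, |f x * g x| ∂μ ≤ √(∫ x, f x ^ 2 ∂μ) * √(∫ x, g x ^ 2 ∂μ) := by
  have hpq : Real.HolderConjugate 2 2 := Real.holderConjugate_iff.2 ⟨one_lt_two, by norm_num⟩
  have h := integral_mul_le_Lp_mul_Lq_of_nonneg hpq (ae_of_all _ fun x => abs_nonneg (f x))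
    (ae_of_all _ fun x => abs_nonneg (g x)) (by rw [ENNReal.ofReal_ofNat]; exact hf.abs)
    (by rw [ENNReal.ofReal_ofNat]; exact hg.abs)
  simp only [Real.rpow_two, sq_abs, ← Real.sqrt_eq_rpow, ← abs_mul] at h
  exact h

/-- `∂_z f`, with the junk value `0` where `z ↦ f (x, z)` is not differentiable. -/
noncomputable def partialSnd {F : Type*} [NormedAddCommGroup F] [NormedSpace ℝ F]
    (f : ℝ × ℝ → F) (p : ℝ × ℝ) : F :=
  deriv (fun z => f (p.1, z)) p.2

section PartialSnd

variable {F : Type*} [NormedAddCommGroup F] [NormedSpace ℝ F]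
  {f : ℝ × ℝ → F} {s : Set (ℝ × ℝ)}

theorem ContDiffOn.hasDerivAt_comp_prodMk (hs : IsOpen s) (hf : ContDiffOn ℝ 1 f s)
    {p : ℝ × ℝ} (hp : p ∈ s) :
    HasDerivAt (fun z => f (p.1, z)) (fderiv ℝ f p (0, 1)) p.2 := by
  have hfp : HasFDerivAt f (fderiv ℝ f p) p :=
    ((hf.differentiableOn one_ne_zero p hp).differentiableAt (hs.mem_nhds hp)).hasFDerivAt
  exact hfp.comp_hasDerivAt p.2 ((hasDerivAt_const _ _).prodMk (hasDerivAt_id _))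

theorem ContDiffOn.partialSnd_eq (hs : IsOpen s) (hf : ContDiffOn ℝ 1 f s) {p : ℝ × ℝ}
    (hp : p ∈ s) : partialSnd f p = fderiv ℝ f p (0, 1) :=
  (hf.hasDerivAt_comp_prodMk hs hp).deriv

theorem ContDiffOn.hasDerivAt_partialSnd (hs : IsOpen s) (hf : ContDiffOn ℝ 1 f s)
    {p : ℝ × ℝ} (hp : p ∈ s) : HasDerivAt (fun z => f (p.1, z)) (partialSnd f p) p.2 :=
  hf.partialSnd_eq hs hp ▸ hf.hasDerivAt_comp_prodMk hs hp

theorem ContDiffOn.continuousOn_partialSnd (hs : IsOpen s) (hf : ContDiffOn ℝ 1 f s) :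
    ContinuousOn (partialSnd f) s :=
  ((hf.continuousOn_fderiv_of_isOpen hs le_rfl).clm_apply continuousOn_const).congr
    fun _ hp => hf.partialSnd_eq hs hp

theorem ContDiffOn.exists_bound_partialSnd (hs : IsOpen s) (hK : IsCompact (closure s))
    (hf : ContDiffOn ℝ 1 f (closure s)) : ∃ C, ∀ p ∈ s, ‖partialSnd f p‖ ≤ C := by
  obtain ⟨C, hC⟩ := hf.exists_bound_fderiv_of_isCompact_closure hs hK
  refine ⟨C * ‖((0 : ℝ), (1 : ℝ))‖, fun p hp => ?_⟩
  rw [(hf.mono subset_closure).partialSnd_eq hs hp]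
  exact (fderiv ℝ f p).le_of_opNorm_le (hC p hp) _

end PartialSnd

theorem ContinuousOn.memLp_restrict_of_bound {α : Type*} [TopologicalSpace α]
    [MeasurableSpace α] [OpensMeasurableSpace α] {μ : Measure α}
    {s : Set α} {f : α → ℝ} (hf : ContinuousOn f s) (hs : MeasurableSet s) (hμs : μ s ≠ ⊤)
    {C : ℝ} (hC : ∀ x ∈ s, ‖f x‖ ≤ C) (p : ℝ≥0∞) : MemLp f p (μ.restrict s) :=
  have : IsFiniteMeasure (μ.restrict s) := isFiniteMeasure_restrict.2 hμs
  .of_bound (hf.aestronglyMeasurable hs) C (ae_restrict_of_forall_mem hs hC)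

theorem setIntegral_prod_eq_integral_setIntegral_preimage_mk {α β : Type*}
    [MeasurableSpace α] [MeasurableSpace β] {μ : Measure α} {ν : Measure β} [SFinite μ]
    [SFinite ν] {s : Set (α × β)} (hs : MeasurableSet s) {F : α × β → ℝ}
    (hF : IntegrableOn F s (μ.prod ν)) :
    Integrable (fun x => ∫ y in Prod.mk x ⁻¹' s, F (x, y) ∂ν) μ ∧
      ∫ p in s, F p ∂μ.prod ν = ∫ x, ∫ y in Prod.mk x ⁻¹' s, F (x, y) ∂ν ∂μ := by
  have hslice : (fun x => ∫ y in Prod.mk x ⁻¹' s, F (x, y) ∂ν) =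
      fun x => ∫ y, s.indicator F (x, y) ∂ν := by
    ext x
    rw [← integral_indicator (measurable_prodMk_left hs)]
    rfl
  have hF' : Integrable (s.indicator F) (μ.prod ν) := (integrable_indicator_iff hs).2 hF
  rw [hslice, ← integral_indicator hs, integral_prod _ hF']
  exact ⟨hF'.integral_prod_left, rfl⟩

section Region

variable {H a b : ℝ} {v : ℝ → ℝ}

theorem isOpen_OIv (hv : ContinuousOn v (Ioo a b)) : IsOpen (OIv H a b v) := by
  have hgap : ContinuousOn (fun p : ℝ × ℝ => v p.1 - p.2) (Prod.fst ⁻¹' Ioo a b) :=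
    (hv.comp continuousOn_fst fun _ hp => hp).sub continuousOn_snd
  convert (hgap.isOpen_inter_preimage (isOpen_Ioo.preimage continuous_fst)
    (isOpen_Ioi (a := 0))).inter (isOpen_Ioi.preimage continuous_snd) using 1
  ext p
  simp only [OIv, mem_ofPred_eq, mem_inter_iff, mem_preimage, mem_Ioi, sub_pos]
  tauto

theorem isCompact_closure_OIv (hv : ContinuousOn v (Icc a b)) :
    IsCompact (closure (OIv H a b v)) := by
  obtain ⟨M, hM⟩ := (isCompact_Icc.image_of_continuousOn hv).bddAbove
  have hbox : IsCompact (Icc a b ×ˢ Icc (-H) M) := isCompact_Icc.prod isCompact_Icc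
  refine (hbox.isBounded.subset ?_).isCompact_closure
  rintro ⟨x, z⟩ ⟨hx, hz, hzv⟩
  exact ⟨Ioo_subset_Icc_self hx, hz.le, hzv.le.trans (hM ⟨x, Ioo_subset_Icc_self hx, rfl⟩)⟩

theorem mk_mem_closure_OIv {x z : ℝ} (hx : x ∈ Ioo a b) (hvx : -H < v x)
    (hz : z ∈ Icc (-H) (v x)) : (x, z) ∈ closure (OIv H a b v) := by
  rw [← closure_Ioo hvx.ne] at hz
  exact map_mem_closure (Continuous.prodMk_right x) hz fun _ hw => ⟨hx, hw⟩

theorem mk_preimage_OIv_of_mem {x : ℝ} (hx : x ∈ Ioo a b) :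
    Prod.mk x ⁻¹' OIv H a b v = Ioo (-H) (v x) := by
  ext z
  simp [OIv, hx.1, hx.2]

theorem mk_preimage_OIv_of_notMem {x : ℝ} (hx : x ∉ Ioo a b) :
    Prod.mk x ⁻¹' OIv H a b v = ∅ :=
  eq_empty_of_forall_notMem fun _ hz => hx hz.1

theorem integral_Ioo_le_setIntegral_OIv {φ : ℝ → ℝ} {F : ℝ × ℝ → ℝ}
    (hO : MeasurableSet (OIv H a b v)) (hF : IntegrableOn F (OIv H a b v))
    (hφ : ∀ x ∈ Ioo a b, 0 ≤ φ x)
    (hφF : ∀ x ∈ Ioo a b, φ x ≤ ∫ z in Ioo (-H) (v x), F (x, z)) :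
    ∫ x in Ioo a b, φ x ≤ ∫ p in OIv H a b v, F p := by
  rw [Measure.volume_eq_prod] at hF ⊢
  obtain ⟨hint, hFubini⟩ := setIntegral_prod_eq_integral_setIntegral_preimage_mk hO hF
  have hsupp : ∀ x ∉ Ioo a b, ∫ z in Prod.mk x ⁻¹' OIv H a b v, F (x, z) = 0 :=
    fun x hx => by
      rw [mk_preimage_OIv_of_notMem hx, Measure.restrict_empty, integral_zero_measure]
  rw [hFubini, ← setIntegral_eq_integral_of_forall_compl_eq_zero hsupp]
  refine integral_mono_of_nonneg (ae_restrict_of_forall_mem measurableSet_Ioo hφ)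
    hint.integrableOn (ae_restrict_of_forall_mem measurableSet_Ioo fun x hx => ?_)
  simpa only [mk_preimage_OIv_of_mem hx] using hφF x hx

theorem sq_le_two_mul_integral_abs_mul_partialSnd {θ : ℝ × ℝ → ℝ} {x C : ℝ}
    (hθ : ContDiffOn ℝ 1 θ (closure (OIv H a b v))) (hO : IsOpen (OIv H a b v))
    (hC : ∀ p ∈ OIv H a b v, ‖θ p * partialSnd θ p‖ ≤ C)
    (hx : x ∈ Ioo a b) (hvx : -H < v x) (h0 : θ (x, v x) = 0) :
    θ (x, -H) ^ 2 ≤ 2 * ∫ z in Ioo (-H) (v x), |θ (x, z) * partialSnd θ (x, z)| := by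
  have hθO := hθ.mono subset_closure
  have hmaps : MapsTo (fun z => (x, z)) (Ioo (-H) (v x)) (OIv H a b v) := fun _ hz => ⟨hx, hz⟩
  have hmk : Continuous fun z : ℝ => (x, z) := Continuous.prodMk_right x
  refine sq_le_two_mul_integral_abs_mul_deriv hvx.le
    (hθ.continuousOn.comp hmk.continuousOn fun _ hz => mk_mem_closure_OIv hx hvx hz)
    (fun z hz => hθO.hasDerivAt_partialSnd hO (hmaps hz)) ?_ h0
  refine memLp_one_iff_integrable.1 (ContinuousOn.memLp_restrict_of_bound ?_ measurableSet_Ioo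
    measure_Ioo_lt_top.ne (fun z hz => hC _ (hmaps hz)) 1)
  exact (hθO.continuousOn.mul (hθO.continuousOn_partialSnd hO)).comp hmk.continuousOn hmaps

end Region

theorem stmt_4_general (H a b : ℝ) (v : ℝ → ℝ)
    (hv : ContinuousOn v (Icc a b)) (hvH : ∀ x ∈ Ioo a b, -H < v x)
    (θ : ℝ × ℝ → ℝ)
    (hθ : ContDiffOn ℝ 1 θ (closure (OIv H a b v)))
    (hθ0 : ∀ x ∈ Ioo a b, θ (x, v x) = 0) :
    ∫ x in Ioo a b, (θ (x, -H)) ^ 2 ≤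
      2 * Real.sqrt (∫ p in OIv H a b v, (θ p) ^ 2)
        * Real.sqrt (∫ p in OIv H a b v, (deriv (fun z => θ (p.1, z)) p.2) ^ 2) := by
  set O := OIv H a b v
  have hO : IsOpen O := isOpen_OIv (hv.mono Ioo_subset_Icc_self)
  have hK : IsCompact (closure O) := isCompact_closure_OIv hv
  have hOfin : volume O ≠ ⊤ := measure_ne_top_of_subset subset_closure hK.measure_lt_top.ne
  have hθO : ContDiffOn ℝ 1 θ O := hθ.mono subset_closure
  obtain ⟨Cθ, hCθ⟩ := hK.exists_bound_of_continuousOn hθ.continuousOn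
  obtain ⟨C, hC⟩ := hθ.exists_bound_partialSnd hO hK
  have hθL2 : MemLp θ 2 (volume.restrict O) := hθO.continuousOn.memLp_restrict_of_bound
    hO.measurableSet hOfin (fun p hp => hCθ p (subset_closure hp)) 2
  have hgL2 : MemLp (partialSnd θ) 2 (volume.restrict O) :=
    (hθO.continuousOn_partialSnd hO).memLp_restrict_of_bound hO.measurableSet hOfin hC 2
  have hθg : ∀ p ∈ O, ‖θ p * partialSnd θ p‖ ≤ Cθ * C := fun p hp => by
    have hθp := hCθ p (subset_closure hp)
    rw [norm_mul]
    exact mul_le_mul hθp (hC p hp) (norm_nonneg _) ((norm_nonneg _).trans hθp)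
  have hslice : ∀ x ∈ Ioo a b,
      θ (x, -H) ^ 2 ≤ ∫ z in Ioo (-H) (v x), 2 * |θ (x, z) * partialSnd θ (x, z)| :=
    fun x hx => by
      rw [integral_const_mul]
      exact sq_le_two_mul_integral_abs_mul_partialSnd hθ hO hθg hx (hvH x hx) (hθ0 x hx)
  calc ∫ x in Ioo a b, θ (x, -H) ^ 2
      ≤ ∫ p in O, 2 * |θ p * partialSnd θ p| :=
        integral_Ioo_le_setIntegral_OIv hO.measurableSet
          ((hθL2.integrable_mul hgL2).abs.const_mul 2) (fun _ _ => sq_nonneg _) hslice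
    _ = 2 * ∫ p in O, |θ p * partialSnd θ p| := integral_const_mul _ _
    _ ≤ 2 * (√(∫ p in O, θ p ^ 2) * √(∫ p in O, partialSnd θ p ^ 2)) := by
        gcongr
        exact integral_abs_mul_le_sqrt_mul_sqrt hθL2 hgL2
    _ = _ := (mul_assoc _ _ _).symm

/-- Trace estimate on the bottom boundary for functions that are `C¹` on the closure
of `O_I(v)` and vanish on the graph of `v`:
`∫_I |θ(x,-H)|² dx ≤ 2 ‖θ‖_{L²(O_I(v))} ‖∂_z θ‖_{L²(O_I(v))}`. -/
theorem stmt_4 (H a b : ℝ) (hH : 0 < H) (hab : a < b) (v : ℝ → ℝ)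
    (hv : ContinuousOn v (Icc a b)) (hvH : ∀ x ∈ Ioo a b, -H < v x)
    (θ : ℝ × ℝ → ℝ)
    (hθ : ContDiffOn ℝ 1 θ (closure (OIv H a b v)))
    (hθ0 : ∀ x ∈ Ioo a b, θ (x, v x) = 0) :
    ∫ x in Ioo a b, (θ (x, -H)) ^ 2 ≤
      2 * Real.sqrt (∫ p in OIv H a b v, (θ p) ^ 2)
        * Real.sqrt (∫ p in OIv H a b v, (deriv (fun z => θ (p.1, z)) p.2) ^ 2) :=
  stmt_4_general H a b v hv hvH θ hθ hθ0
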